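/- arXiv:1703.09413 — 2 statements merged into one kernel-verified Lean document; each statement's English description precedes it below -/
import Mathlib

section
/- Let F be an uncountable field and let 𝒜 be a countable set of nonzero polynomials in the polynomial ring F[t₁, t₂, ...] in countably many variables. Then there exists a sequence (λᵢ)ᵢ≥₁ of elements of F such that G(λ₁, λ₂, ...) ≠ 0 for every G ∈ 𝒜. -/
/-!
The coefficients of all `G ∈ 𝒜` generate a countable subfield `K` of `F`. Since `F` is
uncountable and algebraic over `K` adjoined a transcendence basis, that basis is uncountable, so
`F` contains a sequence `λ` algebraically independent over `K`. Every `G ∈ 𝒜` is the image of a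
nonzero polynomial over `K`, hence does not vanish at `λ`.
-/

open Cardinal MvPolynomial

instance MvPolynomial.instCountable {σ R : Type*} [CommSemiring R] [Countable σ] [Countable R] :
    Countable (MvPolynomial σ R) := by
  rw [← mk_le_aleph0_iff]
  refine cardinalMk_le_max_lift.trans (max_le (max_le ?_ ?_) le_rfl) <;> simp [mk_le_aleph0]

theorem Subfield.countable_closure {F : Type*} [Field F] {s : Set F} (hs : s.Countable) :
    Countable (Subfield.closure s) := by
  rw [← mk_le_aleph0_iff]
  exact (Subfield.cardinalMk_closure_le_max s).trans (max_le hs.le_aleph0 le_rfl)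

theorem IsTranscendenceBasis.uncountable {ι K E : Type*} [Field K] [Field E] [Algebra K E]
    [Countable K] [Uncountable E] {x : ι → E} (hx : IsTranscendenceBasis K x) :
    Uncountable ι := by
  by_contra hι
  have : Countable ι := not_uncountable_iff.mp hι
  have : Countable (Algebra.adjoin K (Set.range x)) := hx.1.aevalEquiv.symm.injective.countable
  have := hx.isAlgebraic
  have hE := Algebra.IsAlgebraic.cardinalMk_le_max (Algebra.adjoin K (Set.range x)) E
  exact not_countable (α := E) (mk_le_aleph0_iff.mp (hE.trans (max_le mk_le_aleph0 le_rfl)))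

theorem exists_algebraicIndependent_nat (K E : Type*) [Field K] [Field E] [Algebra K E]
    [Countable K] [Uncountable E] : ∃ x : ℕ → E, AlgebraicIndependent K x := by
  obtain ⟨ι, b, hb⟩ := exists_isTranscendenceBasis' K E
  have := hb.uncountable
  exact ⟨b ∘ Infinite.natEmbedding ι, hb.1.comp _ (Infinite.natEmbedding ι).injective⟩

theorem AlgebraicIndependent.eval_map_ne_zero {ι K E : Type*} [CommRing K] [CommRing E]
    [Algebra K E] {x : ι → E} (hx : AlgebraicIndependent K x) {p : MvPolynomial ι K}
    (hp : p ≠ 0) : eval x (MvPolynomial.map (algebraMap K E) p) ≠ 0 := by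
  rw [eval_map, ← aeval_def]
  exact fun h => hp (hx.eq_zero_of_aeval_eq_zero p h)

theorem stmt_3 {F : Type*} [Field F] [Uncountable F]
    (𝒜 : Set (MvPolynomial ℕ F)) (hc : 𝒜.Countable) (h0 : ∀ G ∈ 𝒜, G ≠ 0) :
    ∃ lam : ℕ → F, ∀ G ∈ 𝒜, MvPolynomial.eval lam G ≠ 0 := by
  set K := Subfield.closure (⋃ G ∈ 𝒜, (G.coeffs : Set F))
  have : Countable K :=
    Subfield.countable_closure (hc.biUnion fun G _ => G.coeffs.countable_toSet)
  obtain ⟨lam, hlam⟩ := exists_algebraicIndependent_nat K F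
  refine ⟨lam, fun G hG => ?_⟩
  obtain ⟨p, rfl⟩ : G ∈ Set.range (map (algebraMap K F)) := by
    rw [mem_range_map_iff_coeffs_subset]
    exact fun a ha => ⟨⟨a, Subfield.subset_closure (Set.mem_biUnion hG ha)⟩, rfl⟩
  exact hlam.eval_map_ne_zero fun hp => h0 _ hG (by rw [hp, map_zero])
end

section
/- Let F be an uncountable field. Then for any countable family (Gₖ) of nonzero multivariate polynomials over F in countably many variables, the set of common non-vanishing points {f : ℕ → F | Gₖ(f) ≠ 0 for all k} is nonempty. -/
/-!
Substitute values for the variables one at a time. Viewed as a polynomial in `X n` with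
coefficients in the remaining variables, a nonzero polynomial `p` has only finitely many roots, so
only finitely many values `a` make the substitution `X n ↦ a` kill `p`. For a countable family
the bad values form a countable set, and an uncountable ring has a value outside it. Fixing
`X 0, X 1, …` in turn in this way keeps every member of the family nonzero; once all variables
of `G k` are fixed, what remains is the constant `C (eval f (G k))`, hence `eval f (G k) ≠ 0`.
-/

open Function

namespace MvPolynomial

section PolynomialIn

variable {σ R : Type*} [DecidableEq σ] [CommRing R]

noncomputable def polynomialIn (n : σ) : MvPolynomial σ R →ₐ[R] Polynomial (MvPolynomial σ R) :=
  aeval (update (fun i => Polynomial.C (X i)) n Polynomial.X)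

theorem eval_polynomialIn (n : σ) (b p : MvPolynomial σ R) :
    (polynomialIn n p).eval b = bind₁ (update X n b) p := by
  suffices (Polynomial.evalRingHom b).comp (polynomialIn n : _ →ₐ[R] _).toRingHom =
      (bind₁ (update X n b)).toRingHom from RingHom.congr_fun this p
  refine ringHom_ext (fun r => ?_) fun i => ?_
  · simp [polynomialIn, algebraMap_eq]
  · by_cases hi : i = n
    · subst hi
      simp [polynomialIn]
    · simp [polynomialIn, update_of_ne hi]

theorem polynomialIn_injective (n : σ) : Injective (polynomialIn (R := R) n) := by
  refine (injective_iff_map_eq_zero _).2 fun p hp => ?_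
  simpa [hp] using (eval_polynomialIn n (X n) p).symm

theorem finite_setOf_bind₁_update_C_eq_zero [IsDomain R] (n : σ) {p : MvPolynomial σ R}
    (hp : p ≠ 0) : {a : R | bind₁ (update X n (C a)) p = 0}.Finite := by
  have hbad : {a : R | bind₁ (update X n (C a)) p = 0} =
      C ⁻¹' {b | (polynomialIn n p).IsRoot b} := by
    ext a
    simp [Polynomial.IsRoot, eval_polynomialIn]
  rw [hbad]
  have hq : polynomialIn n p ≠ 0 := (map_ne_zero_iff _ (polynomialIn_injective n)).2 hp
  exact (Polynomial.finite_setOfPred_isRoot hq).preimage (C_injective σ R).injOn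

theorem exists_forall_bind₁_update_C_ne_zero [IsDomain R] [Uncountable R] {ι : Type*}
    [Countable ι] {p : ι → MvPolynomial σ R} (hp : ∀ k, p k ≠ 0) (n : σ) :
    ∃ a : R, ∀ k, bind₁ (update X n (C a)) (p k) ≠ 0 := by
  set bad := ⋃ k, {a : R | bind₁ (update X n (C a)) (p k) = 0}
  have hbad : bad.Countable :=
    Set.countable_iUnion fun k => (finite_setOf_bind₁_update_C_eq_zero n (hp k)).countable
  obtain ⟨a, ha⟩ :=
    (Set.ne_univ_iff_exists_notMem bad).1 fun h => Set.not_countable_univ (h ▸ hbad)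
  exact ⟨a, fun k hk => ha (Set.mem_iUnion.2 ⟨k, hk⟩)⟩

end PolynomialIn

theorem bind₁_eq_C_eval_of_vars {σ R : Type*} [CommRing R] {g : σ → MvPolynomial σ R}
    {f : σ → R} {p : MvPolynomial σ R} (h : ∀ i ∈ p.vars, g i = C (f i)) :
    bind₁ g p = C (eval f p) := by
  rw [← coe_aeval_eq_eval, AlgHom.coe_toRingHom, ← aeval_C_comp_left (ι := σ), aeval_eq_bind₁]
  exact hom_congr_vars (f₁ := (bind₁ g).toRingHom) (f₂ := (bind₁ (C ∘ f)).toRingHom)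
    (by ext; simp) (fun i hi _ => by simpa using h i hi) rfl

namespace NonvanishingPoint

variable {R : Type*} [CommRing R] [IsDomain R] [Uncountable R] {ι : Type*} [Countable ι]

noncomputable def nextValue (Q : {Q : ι → MvPolynomial ℕ R // ∀ k, Q k ≠ 0}) (n : ℕ) : R :=
  (exists_forall_bind₁_update_C_ne_zero Q.2 n).choose

noncomputable def substitutedFamily (G : ι → MvPolynomial ℕ R) (hG : ∀ k, G k ≠ 0) :
    ℕ → {Q : ι → MvPolynomial ℕ R // ∀ k, Q k ≠ 0}
  | 0 => ⟨G, hG⟩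
  | n + 1 =>
    ⟨fun k => bind₁ (update X n (C (nextValue (substitutedFamily G hG n) n)))
      ((substitutedFamily G hG n).1 k),
      (exists_forall_bind₁_update_C_ne_zero (substitutedFamily G hG n).2 n).choose_spec⟩

noncomputable def point (G : ι → MvPolynomial ℕ R) (hG : ∀ k, G k ≠ 0) (n : ℕ) : R :=
  nextValue (substitutedFamily G hG n) n

theorem substitutedFamily_eq_bind₁ (G : ι → MvPolynomial ℕ R) (hG : ∀ k, G k ≠ 0) (n : ℕ)
    (k : ι) :
    (substitutedFamily G hG n).1 k =
      bind₁ (fun i => if i < n then C (point G hG i) else X i) (G k) := by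
  induction n with
  | zero => simp [substitutedFamily]
  | succ n ih =>
    change bind₁ _ ((substitutedFamily G hG n).1 k) = _
    rw [ih, ← AlgHom.comp_apply, bind₁_comp_bind₁]
    congr 2
    ext i : 1
    rcases lt_trichotomy i n with hi | rfl | hi
    · simp [hi, Nat.lt_succ_of_lt hi]
    · simp [point]
    · simp [hi.not_gt, (Nat.succ_le_of_lt hi).not_gt, hi.ne']

end NonvanishingPoint

end MvPolynomial

open MvPolynomial MvPolynomial.NonvanishingPoint

theorem stmt_16 {F : Type*} [Field F] [Uncountable F]
    {ι : Type*} [Countable ι] (G : ι → MvPolynomial ℕ F) (hG : ∀ k, G k ≠ 0) :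
    {f : ℕ → F | ∀ k, MvPolynomial.eval f (G k) ≠ 0}.Nonempty := by
  refine ⟨point G hG, fun k hk => ?_⟩
  set N := (G k).vars.sup id + 1
  have hvars : ∀ i ∈ (G k).vars, i < N := fun i hi =>
    Nat.lt_succ_of_le (Finset.le_sup (f := id) hi)
  apply (substitutedFamily G hG N).2 k
  rw [substitutedFamily_eq_bind₁, bind₁_eq_C_eval_of_vars fun i hi => if_pos (hvars i hi), hk,
    map_zero]
end
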